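/- Let G be a Cameron–Walker graph which is Cohen–Macaulay; i.e., G consists of a connected bipartite graph with vertex partition {x₁,…,x_n} ∪ {y₁,…,y_m} together with exactly one leaf edge {xᵢ, wᵢ} attached to each xᵢ and exactly one pendant triangle {yⱼ, zⱼ, w_{n+j}} attached to each yⱼ. Then G equals the clique-whiskered graph (G|_{V(G_bip) ∪ {z₁,…,z_m}})^π, where π = {{xᵢ} : 1 ≤ i ≤ n} ∪ {{yⱼ, zⱼ} : 1 ≤ j ≤ m}. -/

import Mathlib

def cliqueWhisker {V ι : Type*} (G : SimpleGraph V) (p : V → ι) :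
    SimpleGraph (V ⊕ ι) :=
  SimpleGraph.fromRel (fun a b =>
    match a, b with
    | Sum.inl u, Sum.inl v => G.Adj u v
    | Sum.inl u, Sum.inr i => p u = i
    | _, _ => False)

def whiskerGraph {V : Type*} (G : SimpleGraph V) : SimpleGraph (V ⊕ V) :=
  SimpleGraph.fromRel (fun a b =>
    match a, b with
    | Sum.inl u, Sum.inl v => G.Adj u v
    | Sum.inl u, Sum.inr w => u = w
    | _, _ => False)

def IsVertexCover {V : Type*} (G : SimpleGraph V) (C : Set V) : Prop :=
  ∀ ⦃u v : V⦄, G.Adj u v → u ∈ C ∨ v ∈ C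

def IsMinVertexCover {V : Type*} (G : SimpleGraph V) (C : Set V) : Prop :=
  IsVertexCover G C ∧ ∀ D ⊆ C, IsVertexCover G D → D = C

def IsIndep {V : Type*} (G : SimpleGraph V) (A : Set V) : Prop :=
  ∀ u ∈ A, ∀ v ∈ A, ¬ G.Adj u v

def cwGraph (n m : ℕ) (B : SimpleGraph (Fin n ⊕ Fin m)) :
    SimpleGraph ((Fin n ⊕ Fin m) ⊕ (Fin m ⊕ (Fin n ⊕ Fin m))) :=
  SimpleGraph.fromRel (fun a b =>
    match a, b with
    | Sum.inl a, Sum.inl b => B.Adj a b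
    | Sum.inl (Sum.inr j), Sum.inr (Sum.inl j') => j = j'
    | Sum.inl (Sum.inl i), Sum.inr (Sum.inr (Sum.inl i')) => i = i'
    | Sum.inl (Sum.inr j), Sum.inr (Sum.inr (Sum.inr j')) => j = j'
    | Sum.inr (Sum.inl j), Sum.inr (Sum.inr (Sum.inr j')) => j = j'
    | _, _ => False)

def cwS (n m : ℕ) : Set ((Fin n ⊕ Fin m) ⊕ (Fin m ⊕ (Fin n ⊕ Fin m))) :=
  {a | ∀ c, a ≠ Sum.inr (Sum.inr c)}

def cwP (n m : ℕ) (a : ↥(cwS n m)) : Fin n ⊕ Fin m :=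
  match a.1 with
  | Sum.inl c => c
  | Sum.inr (Sum.inl j) => Sum.inr j
  | Sum.inr (Sum.inr c) => c

def cwEmb (n m : ℕ) :
    ↥(cwS n m) ⊕ (Fin n ⊕ Fin m) → (Fin n ⊕ Fin m) ⊕ (Fin m ⊕ (Fin n ⊕ Fin m)) :=
  Sum.elim Subtype.val (fun c => Sum.inr (Sum.inr c))

/-!
In `G` the whisker vertices `w_c = Sum.inr (Sum.inr c)` are pairwise non-adjacent, and `w_c` is
adjacent exactly to the vertices of the clique `c` of `π` (`xᵢ`, resp. `yⱼ` and `zⱼ`). Deleting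
them leaves the induced subgraph on the remaining vertices, and adding them back as whiskers of the
cliques of `π` restores `G`.
-/

section CliqueWhisker

variable {V ι : Type*} (G : SimpleGraph V) (p : V → ι)

@[simp]
theorem cliqueWhisker_adj_inl_inl (u v : V) :
    (cliqueWhisker G p).Adj (Sum.inl u) (Sum.inl v) ↔ G.Adj u v := by
  simp only [cliqueWhisker, SimpleGraph.fromRel_adj, ne_eq, Sum.inl.injEq]
  exact ⟨fun h => h.2.elim id fun h => h.symm, fun h => ⟨h.ne, Or.inl h⟩⟩

@[simp]
theorem cliqueWhisker_adj_inl_inr (u : V) (i : ι) :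
    (cliqueWhisker G p).Adj (Sum.inl u) (Sum.inr i) ↔ p u = i := by
  simp [cliqueWhisker]

@[simp]
theorem cliqueWhisker_adj_inr_inl (i : ι) (u : V) :
    (cliqueWhisker G p).Adj (Sum.inr i) (Sum.inl u) ↔ p u = i := by
  simp [cliqueWhisker]

@[simp]
theorem cliqueWhisker_not_adj_inr_inr (i j : ι) :
    ¬ (cliqueWhisker G p).Adj (Sum.inr i) (Sum.inr j) := by
  simp [cliqueWhisker]

end CliqueWhisker

section InducedWhiskers

variable {V ι : Type*} {S : Set V} {w : ι → V}

theorem bijective_sumElim_val_of_range_eq_compl (hw : Function.Injective w)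
    (hS : Set.range w = Sᶜ) : Function.Bijective (Sum.elim Subtype.val w : S ⊕ ι → V) := by
  refine ⟨Subtype.val_injective.sumElim hw fun s i h => ?_, fun v => ?_⟩
  · have : w i ∈ Sᶜ := hS ▸ Set.mem_range_self i
    exact this (h ▸ s.2)
  · by_cases hv : v ∈ S
    · exact ⟨Sum.inl ⟨v, hv⟩, rfl⟩
    · obtain ⟨i, rfl⟩ : v ∈ Set.range w := hS ▸ hv
      exact ⟨Sum.inr i, rfl⟩

theorem cliqueWhisker_induce_adj_iff (H : SimpleGraph V) (p : S → ι)
    (hw : ∀ i j, ¬ H.Adj (w i) (w j)) (hp : ∀ (s : S) i, H.Adj s (w i) ↔ p s = i)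
    (a b : S ⊕ ι) :
    (cliqueWhisker (H.induce S) p).Adj a b ↔
      H.Adj (Sum.elim Subtype.val w a) (Sum.elim Subtype.val w b) := by
  rcases a with s | i <;> rcases b with t | j <;>
    simp [hw, hp, H.adj_comm (w _)]

end InducedWhiskers

section CameronWalker

variable {n m : ℕ}

theorem range_whisker_eq_compl_cwS :
    Set.range (fun c : Fin n ⊕ Fin m => (Sum.inr (Sum.inr c) : (Fin n ⊕ Fin m) ⊕
      (Fin m ⊕ (Fin n ⊕ Fin m)))) = (cwS n m)ᶜ := by
  ext a
  simp only [Set.mem_range, Set.mem_compl_iff, cwS, Set.mem_ofPred_eq, ne_eq, not_forall,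
    not_not, eq_comm]

theorem cwGraph_not_adj_whisker_whisker (B : SimpleGraph (Fin n ⊕ Fin m)) (c d : Fin n ⊕ Fin m) :
    ¬ (cwGraph n m B).Adj (Sum.inr (Sum.inr c)) (Sum.inr (Sum.inr d)) := by
  simp [cwGraph]

theorem cwGraph_adj_whisker_iff (B : SimpleGraph (Fin n ⊕ Fin m)) (s : cwS n m)
    (c : Fin n ⊕ Fin m) : (cwGraph n m B).Adj s (Sum.inr (Sum.inr c)) ↔ cwP n m s = c := by
  obtain ⟨((i | j) | (j | d)), hs⟩ := s
  case inr.inr => exact absurd rfl (hs d)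
  all_goals rcases c with i' | j' <;> simp [cwGraph, cwP]

end CameronWalker

theorem stmt13_general (n m : ℕ) (B : SimpleGraph (Fin n ⊕ Fin m)) :
    Function.Bijective (cwEmb n m) ∧
    ∀ a b : ↥(cwS n m) ⊕ (Fin n ⊕ Fin m),
      (cliqueWhisker (SimpleGraph.induce (cwS n m) (cwGraph n m B))
          (cwP n m)).Adj a b ↔
        (cwGraph n m B).Adj (cwEmb n m a) (cwEmb n m b) :=
  ⟨bijective_sumElim_val_of_range_eq_compl (fun _ _ h => Sum.inr_injective (Sum.inr_injective h))
      range_whisker_eq_compl_cwS,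
    cliqueWhisker_induce_adj_iff _ _ (cwGraph_not_adj_whisker_whisker B)
      (cwGraph_adj_whisker_iff B)⟩

theorem stmt13 (n m : ℕ) (B : SimpleGraph (Fin n ⊕ Fin m))
    (hbip₁ : ∀ i j : Fin n, ¬ B.Adj (Sum.inl i) (Sum.inl j))
    (hbip₂ : ∀ i j : Fin m, ¬ B.Adj (Sum.inr i) (Sum.inr j))
    (hconn : B.Connected) :
    Function.Bijective (cwEmb n m) ∧
    ∀ a b : ↥(cwS n m) ⊕ (Fin n ⊕ Fin m),
      (cliqueWhisker (SimpleGraph.induce (cwS n m) (cwGraph n m B))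
          (cwP n m)).Adj a b ↔
        (cwGraph n m B).Adj (cwEmb n m a) (cwEmb n m b) :=
  stmt13_general n m B
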